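/- arXiv:2304.02741 — 6 statements merged into one kernel-verified Lean document; each statement's English description precedes it below -/
import Mathlib

section
/- Equivalence theorem (sufficiency direction): if w ∈ Ω_ε is a weight vector with M(w) positive definite and max_{w' ∈ Ω_ε} Tr(M(w)⁻¹ M(w')) = k, then w maximizes log|M(·)| over Ω_ε. -/
/-! With `S = √(A⁻¹)`, the matrix `C = S B S` is positive definite with `tr C = tr (A⁻¹ B)` and
`det C = det B / det A`. Applying `log t ≤ t - 1` to the eigenvalues of `C` gives
`log det B - log det A ≤ tr (A⁻¹ B) - k`, the tangent-line inequality of the concave function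
`log det` at `A`; so `tr (M(w)⁻¹ M(w')) ≤ k` forces `log det M(w') ≤ log det M(w)`. -/

open Matrix MatrixOrder

namespace Matrix.PosDef

variable {n : Type*} [Fintype n] [DecidableEq n]

theorem log_det_le_trace_sub_card {C : Matrix n n ℝ} (hC : C.PosDef) :
    Real.log C.det ≤ C.trace - Fintype.card n := by
  have hpos := hC.eigenvalues_pos
  rw [hC.isHermitian.det_eq_prod_eigenvalues, hC.isHermitian.trace_eq_sum_eigenvalues]
  simp only [RCLike.ofReal_real_eq_id, id]
  rw [Real.log_prod fun i _ => (hpos i).ne', ← Finset.card_univ, ← nsmul_one,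
    ← Finset.sum_const, ← Finset.sum_sub_distrib]
  exact Finset.sum_le_sum fun i _ => Real.log_le_sub_one_of_pos (hpos i)

theorem log_det_le_log_det_add_trace_inv_mul_sub_card {A B : Matrix n n ℝ}
    (hA : A.PosDef) (hB : B.PosDef) :
    Real.log B.det ≤ Real.log A.det + ((A⁻¹ * B).trace - Fintype.card n) := by
  set S := CFC.sqrt A⁻¹
  have hS : S.IsHermitian := (CFC.sqrt_nonneg A⁻¹).posSemidef.isHermitian
  have hSS : S * S = A⁻¹ := CFC.sqrt_mul_sqrt_self A⁻¹ hA.inv.posSemidef.nonneg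
  have hSunit : IsUnit S := CFC.isUnit_sqrt_iff_isStrictlyPositive.mpr hA.inv.isStrictlyPositive
  have hC : (S * B * S).PosDef := by
    simpa only [hS.eq] using hB.conjTranspose_mul_mul_same (mulVec_injective_of_isUnit hSunit)
  have hdet : (S * B * S).det = A.det⁻¹ * B.det := by
    rw [det_mul, det_mul, mul_right_comm, ← det_mul, hSS, det_nonsing_inv, Ring.inverse_eq_inv']
  have htr : (S * B * S).trace = (A⁻¹ * B).trace := by
    rw [trace_mul_comm, ← mul_assoc, hSS]
  have hlog := hC.log_det_le_trace_sub_card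
  rw [hdet, htr, Real.log_mul (inv_ne_zero hA.det_pos.ne') hB.det_pos.ne', Real.log_inv] at hlog
  linarith

end Matrix.PosDef

theorem equivalence_theorem_sufficiency_general (N k : ℕ)
    (M : (Fin N → ℝ) → Matrix (Fin k) (Fin k) ℝ)
    (Ω : Set (Fin N → ℝ))
    (w : Fin N → ℝ) (hpd : (M w).PosDef)
    (hmax : ∀ w' ∈ Ω, Matrix.trace ((M w)⁻¹ * M w') ≤ (k : ℝ)) :
    ∀ w' ∈ Ω, (M w').PosDef → Real.log (M w').det ≤ Real.log (M w).det := by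
  intro w' hw' hpd'
  have h := hpd.log_det_le_log_det_add_trace_inv_mul_sub_card hpd'
  rw [Fintype.card_fin] at h
  linarith [hmax w' hw']

/-- Equivalence theorem, sufficiency: if `w ∈ Ω_ε`, `M(w)` is positive
definite, and `max_{w' ∈ Ω_ε} Tr(M(w)⁻¹ M(w')) = k` (i.e. the trace is `≤ k`
for all `w' ∈ Ω_ε`, with value `k` attained at `w' = w`), then `w` maximizes
`log|M(·)|` over `Ω_ε`. -/
theorem equivalence_theorem_sufficiency (N k : ℕ) (x : Fin N → Fin k → ℝ)
    (ε : ℝ) (hε : 0 < ε) (hε1 : ε < 1)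
    (M : (Fin N → ℝ) → Matrix (Fin k) (Fin k) ℝ)
    (hM : ∀ v, M v = ∑ i, v i • Matrix.vecMulVec (x i) (x i))
    (Ω : Set (Fin N → ℝ))
    (hΩ : Ω = {w | (∀ i, 0 ≤ w i ∧ w i ≤ ε) ∧ ∑ i, w i = 1})
    (w : Fin N → ℝ) (hw : w ∈ Ω) (hpd : (M w).PosDef)
    (hmax : ∀ w' ∈ Ω, Matrix.trace ((M w)⁻¹ * M w') ≤ (k : ℝ))
    (hattain : Matrix.trace ((M w)⁻¹ * M w) = (k : ℝ)) :
    ∀ w' ∈ Ω, (M w').PosDef → Real.log (M w').det ≤ Real.log (M w).det :=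
  equivalence_theorem_sufficiency_general N k M Ω w hpd hmax
end

section
/- Equivalence theorem (necessity direction): if w maximizes log|M(·)| over Ω_ε with M(w) positive definite, then max_{w' ∈ Ω_ε} Tr(M(w)⁻¹ M(w')) = k, with the maximum achieved at w' = w. -/
open Matrix Filter Set Topology

/-! At a maximizer `w`, moving towards any `w'` along the segment `(1 - t) w + t w'` cannot
increase `det M`. Writing `M((1 - t) w + t w') = M(w) (1 + t C)` with `C = M(w)⁻¹ (M(w') - M(w))`,
this says `det (1 + t C) = 1 + t Tr C + O(t²) ≤ 1` for small `t > 0`, hence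
`Tr C = Tr (M(w)⁻¹ M(w')) - k ≤ 0`. -/

namespace Matrix

variable {n : Type*} [Fintype n] [DecidableEq n]

theorem trace_nonpos_of_det_one_add_smul_le_one {C : Matrix n n ℝ}
    (h : ∀ᶠ t : ℝ in 𝓝[>] 0, det (1 + t • C) ≤ 1) : trace C ≤ 0 := by
  set q := (det (1 + (Polynomial.X : Polynomial ℝ) • C.map Polynomial.C)).divX.divX
  have hbound : ∀ᶠ t in 𝓝[>] 0, trace C ≤ -q.eval t * t := by
    filter_upwards [h, self_mem_nhdsWithin] with t hdet (ht : 0 < t)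
    rw [det_one_add_smul] at hdet
    exact le_of_mul_le_mul_right (by nlinarith) ht
  have hlim : Tendsto (fun t => -q.eval t * t) (𝓝[>] 0) (𝓝 0) := by
    have hcont : Continuous fun t => -q.eval t * t := by fun_prop
    simpa using (hcont.tendsto 0).mono_left nhdsWithin_le_nhds
  exact ge_of_tendsto hlim hbound

theorem trace_inv_mul_le_card_of_det_segment_le {A B : Matrix n n ℝ} (hA : 0 < A.det)
    (h : ∀ t ∈ Ioo (0 : ℝ) 1, det ((1 - t) • A + t • B) ≤ det A) :
    trace (A⁻¹ * B) ≤ Fintype.card n := by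
  have hAunit : IsUnit A.det := hA.ne'.isUnit
  set C := A⁻¹ * (B - A)
  have hsegment : ∀ t : ℝ, (1 - t) • A + t • B = A * (1 + t • C) := by
    intro t
    rw [Matrix.mul_add, mul_one, Matrix.mul_smul, mul_nonsing_inv_cancel_left _ _ hAunit]
    module
  have hC : trace C ≤ 0 := by
    refine trace_nonpos_of_det_one_add_smul_le_one ?_
    filter_upwards [Ioo_mem_nhdsGT zero_lt_one] with t ht
    have := h t ht
    rw [hsegment, det_mul] at this
    exact le_of_mul_le_mul_left (by simpa using this) hA
  have htrace : trace C = trace (A⁻¹ * B) - Fintype.card n := by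
    simp [C, Matrix.mul_sub, trace_sub, nonsing_inv_mul _ hAunit]
  linarith

end Matrix

theorem convex_cappedSimplex {ι : Type*} [Fintype ι] (ε : ℝ) :
    Convex ℝ {w : ι → ℝ | (∀ i, 0 ≤ w i ∧ w i ≤ ε) ∧ ∑ i, w i = 1} := by
  rintro u ⟨hu, hus⟩ v ⟨hv, hvs⟩ a b ha hb hab
  refine ⟨fun i => ⟨?_, ?_⟩, ?_⟩
  · simp only [Pi.add_apply, Pi.smul_apply, smul_eq_mul]
    exact add_nonneg (mul_nonneg ha (hu i).1) (mul_nonneg hb (hv i).1)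
  · have := hu i; have := hv i
    simp only [Pi.add_apply, Pi.smul_apply, smul_eq_mul]
    nlinarith
  · simp only [Pi.add_apply, Pi.smul_apply, smul_eq_mul, Finset.sum_add_distrib,
      ← Finset.mul_sum, hus, hvs]
    linarith

theorem equivalence_theorem_necessity_general (N k : ℕ) (x : Fin N → Fin k → ℝ)
    (ε : ℝ)
    (M : (Fin N → ℝ) → Matrix (Fin k) (Fin k) ℝ)
    (hM : ∀ v, M v = ∑ i, v i • Matrix.vecMulVec (x i) (x i))
    (Ω : Set (Fin N → ℝ))
    (hΩ : Ω = {w | (∀ i, 0 ≤ w i ∧ w i ≤ ε) ∧ ∑ i, w i = 1})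
    (w : Fin N → ℝ) (hw : w ∈ Ω) (hpd : (M w).PosDef)
    (hopt : ∀ w' ∈ Ω, (M w').PosDef →
      Real.log (M w').det ≤ Real.log (M w).det) :
    (∀ w' ∈ Ω, Matrix.trace ((M w)⁻¹ * M w') ≤ (k : ℝ)) ∧
      Matrix.trace ((M w)⁻¹ * M w) = (k : ℝ) := by
  have hlin : M = Fintype.linearCombination ℝ fun i => vecMulVec (x i) (x i) := by
    funext v; rw [hM, Fintype.linearCombination_apply]
  have hpsd : ∀ v ∈ Ω, (M v).PosSemidef := by
    intro v hv
    rw [hΩ] at hv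
    rw [hM]
    exact posSemidef_sum _ fun i _ =>
      (posSemidef_vecMulVec_self_star (x i)).smul (hv.1 i).1
  refine ⟨fun w' hw' => ?_, by simp [nonsing_inv_mul _ hpd.det_pos.ne'.isUnit]⟩
  simpa using trace_inv_mul_le_card_of_det_segment_le hpd.det_pos fun t ⟨ht0, ht1⟩ => by
    have hmem : (1 - t) • w + t • w' ∈ Ω :=
      hΩ ▸ convex_cappedSimplex ε (hΩ ▸ hw) (hΩ ▸ hw') (by linarith) ht0.le (by ring)
    have hsegment : M ((1 - t) • w + t • w') = (1 - t) • M w + t • M w' := by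
      rw [hlin, map_add, map_smul, map_smul]
    have hpd' : (M ((1 - t) • w + t • w')).PosDef := hsegment ▸
      (hpd.smul (sub_pos.2 ht1)).add_posSemidef ((hpsd w' hw').smul ht0.le)
    have := hopt _ hmem hpd'
    rwa [Real.log_le_log_iff hpd'.det_pos hpd.det_pos, hsegment] at this

/-- Equivalence theorem, necessity: if `w` maximizes `log|M(·)|` over `Ω_ε`
with `M(w)` positive definite, then `max_{w' ∈ Ω_ε} Tr(M(w)⁻¹ M(w')) = k`,
the maximum being achieved at `w' = w`. -/
theorem equivalence_theorem_necessity (N k : ℕ) (x : Fin N → Fin k → ℝ)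
    (ε : ℝ) (hε : 0 < ε) (hε1 : ε < 1)
    (M : (Fin N → ℝ) → Matrix (Fin k) (Fin k) ℝ)
    (hM : ∀ v, M v = ∑ i, v i • Matrix.vecMulVec (x i) (x i))
    (Ω : Set (Fin N → ℝ))
    (hΩ : Ω = {w | (∀ i, 0 ≤ w i ∧ w i ≤ ε) ∧ ∑ i, w i = 1})
    (w : Fin N → ℝ) (hw : w ∈ Ω) (hpd : (M w).PosDef)
    (hopt : ∀ w' ∈ Ω, (M w').PosDef →
      Real.log (M w').det ≤ Real.log (M w).det) :
    (∀ w' ∈ Ω, Matrix.trace ((M w)⁻¹ * M w') ≤ (k : ℝ)) ∧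
      Matrix.trace ((M w)⁻¹ * M w) = (k : ℝ) :=
  equivalence_theorem_necessity_general N k x ε M hM Ω hΩ w hw hpd hopt
end

section
/- Monotonicity of optimal weights in leverage: if w maximizes log|M(·)| over Ω_ε (with M(w) positive definite) and xᵢᵀ M(w)⁻¹ xᵢ < xⱼᵀ M(w)⁻¹ xⱼ, then wᵢ ≤ wⱼ. -/
/-!
Move a small mass `δ` of weight from `i` to `j`. This is a rank-two update
`M ↦ M + δ (xⱼxⱼᵀ - xᵢxᵢᵀ)`, and the matrix determinant lemma gives exactly
`det M' = det M · ((1 + δ lⱼ)(1 - δ lᵢ) + δ² (xᵢᵀM⁻¹xⱼ)²)` with `l = xᵀM⁻¹x` the leverages.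
If `lᵢ < lⱼ` the first-order term `δ (lⱼ - lᵢ)` wins for small `δ`, so the determinant grows;
if moreover `wⱼ < wᵢ`, small transfers stay in `Ω_ε`, contradicting optimality.
-/

open Matrix

namespace Matrix

variable {n R : Type*} [Fintype n] [CommRing R]

theorem IsSymm.dotProduct_mulVec_comm {A : Matrix n n R} (hA : A.IsSymm) (u v : n → R) :
    u ⬝ᵥ A *ᵥ v = v ⬝ᵥ A *ᵥ u := by
  rw [dotProduct_mulVec, dotProduct_comm, ← mulVec_transpose, hA.eq]

theorem det_add_smul_sub_vecMulVec [DecidableEq n] (A : Matrix n n R) (hA : IsUnit A.det)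
    (u v : n → R) (t : R) :
    (A + t • (vecMulVec u u - vecMulVec v v)).det =
      A.det * ((1 + t * (u ⬝ᵥ A⁻¹ *ᵥ u)) * (1 - t * (v ⬝ᵥ A⁻¹ *ᵥ v)) +
        t ^ 2 * ((u ⬝ᵥ A⁻¹ *ᵥ v) * (v ⬝ᵥ A⁻¹ *ᵥ u))) := by
  let U : Matrix n (Fin 2) R := (of ![t • u, -(t • v)])ᵀ
  let V : Matrix (Fin 2) n R := of ![u, v]
  have hUV : U * V = t • (vecMulVec u u - vecMulVec v v) := by
    ext a c
    simp only [U, V, mul_apply, transpose_apply, of_apply, Fin.sum_univ_two, cons_val_zero,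
      cons_val_one, cons_val_fin_one, Pi.smul_apply, Pi.neg_apply, smul_eq_mul, smul_apply,
      sub_apply, vecMulVec_apply]
    ring
  have hVAU : 1 + V * A⁻¹ * U = !![1 + t * (u ⬝ᵥ A⁻¹ *ᵥ u), -(t * (u ⬝ᵥ A⁻¹ *ᵥ v));
      t * (v ⬝ᵥ A⁻¹ *ᵥ u), 1 - t * (v ⬝ᵥ A⁻¹ *ᵥ v)] := by
    have entry (b c : Fin 2) :
        (V * A⁻¹ * U) b c = ![u, v] b ⬝ᵥ A⁻¹ *ᵥ ![t • u, -(t • v)] c := by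
      rw [dotProduct_mulVec]
      rfl
    ext b c
    rw [add_apply, entry]
    fin_cases b <;> fin_cases c <;> simp [mulVec_smul, mulVec_neg, sub_eq_add_neg]
  rw [← hUV, det_add_mul U V hA, hVAU, det_fin_two_of]
  ring

theorem PosDef.det_mul_le_det_add_smul_sub_vecMulVec [DecidableEq n] {A : Matrix n n ℝ}
    (hA : A.PosDef) (u v : n → ℝ) (t : ℝ) :
    A.det * ((1 + t * (u ⬝ᵥ A⁻¹ *ᵥ u)) * (1 - t * (v ⬝ᵥ A⁻¹ *ᵥ v))) ≤
      (A + t • (vecMulVec u u - vecMulVec v v)).det := by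
  have hsymm : A⁻¹.IsSymm := isHermitian_iff_isSymm.mp hA.inv.isHermitian
  rw [det_add_smul_sub_vecMulVec A hA.det_pos.ne'.isUnit u v t,
    hsymm.dotProduct_mulVec_comm v u]
  exact mul_le_mul_of_nonneg_left
    (le_add_of_nonneg_right (mul_nonneg (sq_nonneg t) (mul_self_nonneg _))) hA.det_pos.le

theorem posSemidef_sum_smul_vecMulVec {ι : Type*} [Fintype ι] {c : ι → ℝ} (hc : ∀ m, 0 ≤ c m)
    (x : ι → n → ℝ) : (∑ m, c m • vecMulVec (x m) (x m)).PosSemidef :=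
  posSemidef_sum _ fun m _ => (posSemidef_vecMulVec_self_star (x m)).smul (hc m)

end Matrix

def cappedSimplex (ι : Type*) [Fintype ι] (ε : ℝ) : Set (ι → ℝ) :=
  {w | (∀ i, 0 ≤ w i ∧ w i ≤ ε) ∧ ∑ i, w i = 1}

section WeightTransfer

variable {ι : Type*} [Fintype ι] [DecidableEq ι]

theorem sum_add_single_sub_single_smul {R E : Type*} [Ring R] [AddCommGroup E] [Module R E]
    (w : ι → R) (X : ι → E) (i j : ι) (δ : R) :
    ∑ m, (w + Pi.single j δ - Pi.single i δ : ι → R) m • X m =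
      ∑ m, w m • X m + δ • (X j - X i) := by
  simp [add_smul, sub_smul, Finset.sum_add_distrib, Finset.sum_sub_distrib, Pi.single_apply,
    smul_sub, add_sub_assoc]

theorem add_single_sub_single_mem_cappedSimplex {ε : ℝ} {w : ι → ℝ}
    (hw : w ∈ cappedSimplex ι ε) {i j : ι} {δ : ℝ} (hδ : 0 ≤ δ) (hδle : δ ≤ w i - w j) :
    w + Pi.single j δ - Pi.single i δ ∈ cappedSimplex ι ε := by
  obtain ⟨hbd, hsum⟩ := hw
  refine ⟨fun m => ?_, by simp [Finset.sum_add_distrib, Finset.sum_sub_distrib, hsum]⟩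
  obtain ⟨-, hiε⟩ := hbd i
  obtain ⟨hj0, -⟩ := hbd j
  obtain ⟨hm0, hmε⟩ := hbd m
  simp only [Pi.add_apply, Pi.sub_apply, Pi.single_apply]
  split_ifs <;> subst_vars <;> constructor <;> linarith

end WeightTransfer

theorem exists_pos_one_lt_one_add_mul_mul_one_sub_mul {a b d : ℝ} (hab : a < b) (hd : 0 < d) :
    ∃ δ, 0 < δ ∧ δ ≤ d ∧ 1 < (1 + δ * b) * (1 - δ * a) := by
  have hpos : 0 < |a * b| + 1 := by positivity
  set δ := min d ((b - a) / (|a * b| + 1))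
  have hδ : 0 < δ := lt_min hd (div_pos (by linarith) hpos)
  have hδab : δ * (|a * b| + 1) ≤ b - a := (le_div_iff₀ hpos).mp (min_le_right _ _)
  have hsmall : δ * (a * b) < b - a := by
    nlinarith [mul_le_mul_of_nonneg_left (le_abs_self (a * b)) hδ.le]
  refine ⟨δ, hδ, min_le_left _ _, ?_⟩
  nlinarith [mul_pos hδ (sub_pos.2 hsmall)]

theorem optimal_weights_monotone_in_leverage_general (N k : ℕ) (x : Fin N → Fin k → ℝ)
    (ε : ℝ)
    (M : (Fin N → ℝ) → Matrix (Fin k) (Fin k) ℝ)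
    (hM : ∀ v, M v = ∑ i, v i • Matrix.vecMulVec (x i) (x i))
    (Ω : Set (Fin N → ℝ))
    (hΩ : Ω = {w | (∀ i, 0 ≤ w i ∧ w i ≤ ε) ∧ ∑ i, w i = 1})
    (w : Fin N → ℝ) (hw : w ∈ Ω) (hpd : (M w).PosDef)
    (hopt : ∀ w' ∈ Ω, (M w').PosDef →
      Real.log (M w').det ≤ Real.log (M w).det)
    (i j : Fin N)
    (hlev : x i ⬝ᵥ ((M w)⁻¹ *ᵥ x i) < x j ⬝ᵥ ((M w)⁻¹ *ᵥ x j)) :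
    w i ≤ w j := by
  by_contra! hji
  subst hΩ
  obtain ⟨δ, hδ, hδle, hgrowth⟩ :=
    exists_pos_one_lt_one_add_mul_mul_one_sub_mul hlev (sub_pos.2 hji)
  set w' := w + Pi.single j δ - Pi.single i δ
  have hw' : w' ∈ cappedSimplex (Fin N) ε :=
    add_single_sub_single_mem_cappedSimplex hw hδ.le hδle
  have hMw' : M w' = M w + δ • (vecMulVec (x j) (x j) - vecMulVec (x i) (x i)) := by
    rw [hM, hM, sum_add_single_sub_single_smul]
  have hdet : (M w).det < (M w').det :=
    calc (M w).det < (M w).det * ((1 + δ * (x j ⬝ᵥ (M w)⁻¹ *ᵥ x j)) *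
          (1 - δ * (x i ⬝ᵥ (M w)⁻¹ *ᵥ x i))) := lt_mul_of_one_lt_right hpd.det_pos hgrowth
      _ ≤ (M w').det := hMw' ▸ hpd.det_mul_le_det_add_smul_sub_vecMulVec _ _ _
  have hpd' : (M w').PosDef := by
    have hpsd : (M w').PosSemidef :=
      hM w' ▸ posSemidef_sum_smul_vecMulVec (fun m => (hw'.1 m).1) x
    exact hpsd.posDef_iff_det_ne_zero.mpr (hpd.det_pos.trans hdet).ne'
  exact (hopt w' hw' hpd').not_gt (Real.log_lt_log hpd.det_pos hdet)

/-- Monotonicity of optimal weights in leverage: if `w` maximizes `log|M(·)|`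
over `Ω_ε` (with `M(w)` positive definite) and
`xᵢᵀ M(w)⁻¹ xᵢ < xⱼᵀ M(w)⁻¹ xⱼ`, then `wᵢ ≤ wⱼ`. -/
theorem optimal_weights_monotone_in_leverage (N k : ℕ) (x : Fin N → Fin k → ℝ)
    (ε : ℝ) (hε : 0 < ε) (hε1 : ε < 1)
    (M : (Fin N → ℝ) → Matrix (Fin k) (Fin k) ℝ)
    (hM : ∀ v, M v = ∑ i, v i • Matrix.vecMulVec (x i) (x i))
    (Ω : Set (Fin N → ℝ))
    (hΩ : Ω = {w | (∀ i, 0 ≤ w i ∧ w i ≤ ε) ∧ ∑ i, w i = 1})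
    (w : Fin N → ℝ) (hw : w ∈ Ω) (hpd : (M w).PosDef)
    (hopt : ∀ w' ∈ Ω, (M w').PosDef →
      Real.log (M w').det ≤ Real.log (M w).det)
    (i j : Fin N)
    (hlev : x i ⬝ᵥ ((M w)⁻¹ *ᵥ x i) < x j ⬝ᵥ ((M w)⁻¹ *ᵥ x j)) :
    w i ≤ w j :=
  optimal_weights_monotone_in_leverage_general N k x ε M hM Ω hΩ w hw hpd hopt i j hlev
end

section
/- Connection between penalized and constrained problems: let α = (α₁,...,α_N) solve max_{0 ≤ αᵢ ≤ λ} [log|Σᵢ αᵢ xᵢxᵢᵀ| + k(1 − Σᵢ αᵢ)]. Set s = Σᵢ αᵢ > 0 and ε = λ/s. Then w = α/s solves max log|M(w)| over Ω_ε = {w : 0 ≤ wᵢ ≤ ε, Σwᵢ = 1}. -/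
/-!
The penalized objective splits along the ray through a weight vector: on `{β : ∑ βᵢ = s}` the
penalty `k(1 - s)` is constant, and `log |M(s • w)| = k log s + log |M(w)|` because `M` is
linear. Hence comparing `α = s • w` with the box-feasible competitor `s • w'` for any
`w' ∈ Ω_{λ/s}` yields `log |M(w')| ≤ log |M(w)|`.
-/

open Finset

theorem Matrix.log_det_smul {n : Type*} [Fintype n] [DecidableEq n] {c : ℝ} (hc : 0 < c)
    {A : Matrix n n ℝ} (hA : A.det ≠ 0) :
    Real.log (c • A).det = Fintype.card n * Real.log c + Real.log A.det := by
  rw [Matrix.det_smul, Real.log_mul (pow_ne_zero _ hc.ne') hA, Real.log_pow]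

theorem sum_smul_smul_eq_smul_sum {ι R M : Type*} [Fintype ι] [CommSemiring R]
    [AddCommMonoid M] [Module R M] (c : R) (v : ι → R) (f : ι → M) :
    ∑ i, (c • v) i • f i = c • ∑ i, v i • f i := by
  simp only [Pi.smul_apply, smul_eq_mul, mul_smul, smul_sum]

theorem forall_smul_nonneg_le_iff {ι : Type*} {s lam : ℝ} (hs : 0 < s)
    (v : ι → ℝ) :
    (∀ i, 0 ≤ (s • v) i ∧ (s • v) i ≤ lam) ↔ ∀ i, 0 ≤ v i ∧ v i ≤ lam / s := by
  simp only [Pi.smul_apply, smul_eq_mul, le_div_iff₀ hs, mul_comm s,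
    mul_nonneg_iff_of_pos_right hs]

theorem penalized_to_constrained_general (N k : ℕ) (x : Fin N → Fin k → ℝ)
    (lam : ℝ)
    (M : (Fin N → ℝ) → Matrix (Fin k) (Fin k) ℝ)
    (hM : ∀ v, M v = ∑ i, v i • Matrix.vecMulVec (x i) (x i))
    (α : Fin N → ℝ) (hbox : ∀ i, 0 ≤ α i ∧ α i ≤ lam)
    (hpdα : (M α).PosDef)
    (hmaxα : ∀ β : Fin N → ℝ, (∀ i, 0 ≤ β i ∧ β i ≤ lam) → (M β).PosDef →
      Real.log (M β).det + k * (1 - ∑ i, β i) ≤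
        Real.log (M α).det + k * (1 - ∑ i, α i))
    (s : ℝ) (hs : s = ∑ i, α i) (hspos : 0 < s)
    (ε : ℝ) (hε : ε = lam / s)
    (w : Fin N → ℝ) (hwdef : w = s⁻¹ • α) :
    ((∀ i, 0 ≤ w i ∧ w i ≤ ε) ∧ ∑ i, w i = 1) ∧
    ∀ w' : Fin N → ℝ, ((∀ i, 0 ≤ w' i ∧ w' i ≤ ε) ∧ ∑ i, w' i = 1) →
      (M w').PosDef → Real.log (M w').det ≤ Real.log (M w).det := by
  have hMsmul (c : ℝ) (v : Fin N → ℝ) : M (c • v) = c • M v := by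
    rw [hM, hM, sum_smul_smul_eq_smul_sum]
  have hsum_smul (v : Fin N → ℝ) : ∑ i, (s • v) i = s * ∑ i, v i := by
    simp only [Pi.smul_apply, smul_eq_mul, mul_sum]
  have hαw : α = s • w := by rw [hwdef, smul_inv_smul₀ hspos.ne']
  have hdetw : (M w).det ≠ 0 := by
    have hdetα := hpdα.det_pos.ne'
    rwa [hαw, hMsmul, Matrix.det_smul, mul_ne_zero_iff, and_iff_right (pow_ne_zero _ hspos.ne')]
      at hdetα
  refine ⟨⟨hε ▸ (forall_smul_nonneg_le_iff hspos w).1 (hαw ▸ hbox), ?_⟩, ?_⟩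
  · rw [← mul_right_inj' hspos.ne', ← hsum_smul, ← hαw, mul_one, hs]
  rintro w' ⟨hbox', hsum'⟩ hpd'
  have hmax := hmaxα (s • w') ((forall_smul_nonneg_le_iff hspos w').2 (hε ▸ hbox'))
    (hMsmul s w' ▸ hpd'.smul hspos)
  rw [hsum_smul, hsum', mul_one, ← hs, hαw, hMsmul, hMsmul,
    Matrix.log_det_smul hspos hpd'.det_pos.ne', Matrix.log_det_smul hspos hdetw] at hmax
  linarith

/-- Connection between the penalized and constrained problems: if `α` solves
`max_{0 ≤ αᵢ ≤ λ} [log|M(α)| + k(1 − ∑αᵢ)]` with `M(α)` positive definite and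
`s = ∑αᵢ > 0`, then `w = α/s` solves `max log|M(·)|` over `Ω_ε` with
`ε = λ/s`. -/
theorem penalized_to_constrained (N k : ℕ) (x : Fin N → Fin k → ℝ)
    (lam : ℝ) (hlam : 0 < lam)
    (M : (Fin N → ℝ) → Matrix (Fin k) (Fin k) ℝ)
    (hM : ∀ v, M v = ∑ i, v i • Matrix.vecMulVec (x i) (x i))
    (α : Fin N → ℝ) (hbox : ∀ i, 0 ≤ α i ∧ α i ≤ lam)
    (hpdα : (M α).PosDef)
    (hmaxα : ∀ β : Fin N → ℝ, (∀ i, 0 ≤ β i ∧ β i ≤ lam) → (M β).PosDef →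
      Real.log (M β).det + k * (1 - ∑ i, β i) ≤
        Real.log (M α).det + k * (1 - ∑ i, α i))
    (s : ℝ) (hs : s = ∑ i, α i) (hspos : 0 < s)
    (ε : ℝ) (hε : ε = lam / s)
    (w : Fin N → ℝ) (hwdef : w = s⁻¹ • α) :
    ((∀ i, 0 ≤ w i ∧ w i ≤ ε) ∧ ∑ i, w i = 1) ∧
    ∀ w' : Fin N → ℝ, ((∀ i, 0 ≤ w' i ∧ w' i ≤ ε) ∧ ∑ i, w' i = 1) →
      (M w').PosDef → Real.log (M w').det ≤ Real.log (M w).det :=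
  penalized_to_constrained_general N k x lam M hM α hbox hpdα hmaxα s hs hspos ε hε w hwdef
end

section
/- If α solves the penalized problem max_{0 ≤ αᵢ ≤ λ} [log|M(α)| + k(1 − Σᵢαᵢ)] with M(α) = Σᵢ αᵢ xᵢxᵢᵀ positive definite, then for each i: αᵢ = 0 if xᵢᵀ M(α)⁻¹ xᵢ < k, and αᵢ = λ if xᵢᵀ M(α)⁻¹ xᵢ > k. -/
/-!
Perturb only the `i`-th weight: `M (α + t eᵢ) = M α + t xᵢxᵢᵀ`, whose determinant is
`det (M α) * (1 + t cᵢ)` with `cᵢ = xᵢᵀ (M α)⁻¹ xᵢ` (matrix determinant lemma). While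
`1 + t cᵢ > 0` this matrix is still positive definite, being positive semidefinite with nonzero
determinant, so maximality of `α` gives `log (1 + t cᵢ) ≤ k t` for every admissible `t`.
As `log (1 + s) ≥ s / (1 + s)`, letting `t → 0⁺` (possible when `αᵢ < λ`) gives `cᵢ ≤ k`, and
letting `t → 0⁻` (possible when `αᵢ > 0`) gives `k ≤ cᵢ`.
-/

open Matrix Filter Topology Set

theorem Real.le_mul_one_add_of_log_one_add_le {s y : ℝ} (hs : 0 < 1 + s)
    (h : Real.log (1 + s) ≤ y) : s ≤ y * (1 + s) := by
  have hlog := (Real.one_sub_inv_le_log_of_pos hs).trans h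
  have hcancel : (1 + s)⁻¹ * (1 + s) = 1 := inv_mul_cancel₀ hs.ne'
  nlinarith [mul_le_mul_of_nonneg_right hlog hs.le]

theorem tendsto_mul_one_add_mul_nhds_zero (c κ : ℝ) :
    Tendsto (fun t => κ * (1 + t * c)) (𝓝 0) (𝓝 κ) :=
  (by fun_prop : Continuous fun t : ℝ => κ * (1 + t * c)).tendsto' 0 κ (by simp)

theorem eventually_pos_one_add_mul (c : ℝ) : ∀ᶠ t in 𝓝 (0 : ℝ), 0 < 1 + t * c := by
  simpa using tendsto_mul_one_add_mul_nhds_zero c 1 |>.eventually (lt_mem_nhds one_pos)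

theorem le_of_eventually_log_one_add_mul_le_nhdsGT {c κ : ℝ}
    (h : ∀ᶠ t in 𝓝[>] 0, 0 < 1 + t * c → Real.log (1 + t * c) ≤ κ * t) : c ≤ κ := by
  refine ge_of_tendsto (x := 𝓝[>] 0)
    ((tendsto_mul_one_add_mul_nhds_zero c κ).mono_left nhdsWithin_le_nhds) ?_
  filter_upwards [h, nhdsWithin_le_nhds (eventually_pos_one_add_mul c), self_mem_nhdsWithin]
    with t hlog hpos (ht : 0 < t)
  have := Real.le_mul_one_add_of_log_one_add_le hpos (hlog hpos)
  nlinarith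

theorem ge_of_eventually_log_one_add_mul_le_nhdsLT {c κ : ℝ}
    (h : ∀ᶠ t in 𝓝[<] 0, 0 < 1 + t * c → Real.log (1 + t * c) ≤ κ * t) : κ ≤ c := by
  refine le_of_tendsto (x := 𝓝[<] 0)
    ((tendsto_mul_one_add_mul_nhds_zero c κ).mono_left nhdsWithin_le_nhds) ?_
  filter_upwards [h, nhdsWithin_le_nhds (eventually_pos_one_add_mul c), self_mem_nhdsWithin]
    with t hlog hpos (ht : t < 0)
  have := Real.le_mul_one_add_of_log_one_add_le hpos (hlog hpos)
  nlinarith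

theorem Matrix.det_add_vecMulVec {m R : Type*} [Fintype m] [DecidableEq m] [CommRing R]
    {A : Matrix m m R} (hA : IsUnit A.det) (u v : m → R) :
    (A + vecMulVec u v).det = A.det * (1 + v ⬝ᵥ A⁻¹ *ᵥ u) := by
  rw [vecMulVec_eq Unit, det_add_replicateCol_mul_replicateRow hA]
  congr 1
  rw [det_unique, add_apply, one_apply_eq, Matrix.mul_assoc, ← replicateCol_mulVec,
    replicateRow_mul_replicateCol_apply]

section

variable {ι n : Type*} [Fintype ι]

noncomputable def informationMatrix (x : ι → n → ℝ) (w : ι → ℝ) : Matrix n n ℝ :=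
  ∑ i, w i • vecMulVec (x i) (x i)

namespace informationMatrix

variable (x : ι → n → ℝ) {w : ι → ℝ}

theorem posSemidef [Fintype n] (hw : 0 ≤ w) : (informationMatrix x w).PosSemidef :=
  posSemidef_sum _ fun i _ ↦ (posSemidef_vecMulVec_self_star (x i)).smul (hw i)

theorem add_single [DecidableEq ι] (w : ι → ℝ) (i : ι) (t : ℝ) :
    informationMatrix x (w + Pi.single i t) =
      informationMatrix x w + t • vecMulVec (x i) (x i) := by
  simp only [informationMatrix, Pi.add_apply, add_smul, Finset.sum_add_distrib]
  congr 1
  rw [Fintype.sum_eq_single i fun j hj ↦ by simp [hj]]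
  simp

variable [DecidableEq ι] [Fintype n] [DecidableEq n]

theorem det_add_single (hw : (informationMatrix x w).PosDef) (i : ι) (t : ℝ) :
    (informationMatrix x (w + Pi.single i t)).det =
      (informationMatrix x w).det * (1 + t * (x i ⬝ᵥ (informationMatrix x w)⁻¹ *ᵥ x i)) := by
  rw [add_single, ← smul_vecMulVec, det_add_vecMulVec hw.det_pos.ne'.isUnit, mulVec_smul,
    dotProduct_smul, smul_eq_mul]

theorem posDef_add_single (hw : (informationMatrix x w).PosDef) {i : ι} {t : ℝ}
    (hnonneg : 0 ≤ w + Pi.single i t)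
    (ht : 0 < 1 + t * (x i ⬝ᵥ (informationMatrix x w)⁻¹ *ᵥ x i)) :
    (informationMatrix x (w + Pi.single i t)).PosDef := by
  rw [(posSemidef x hnonneg).posDef_iff_det_ne_zero, det_add_single x hw]
  exact mul_ne_zero hw.det_pos.ne' ht.ne'

theorem log_one_add_mul_le_of_isMax {α : ι → ℝ} {lam κ : ℝ}
    (hbox : ∀ j, 0 ≤ α j ∧ α j ≤ lam) (hpd : (informationMatrix x α).PosDef)
    (hmax : ∀ β : ι → ℝ, (∀ j, 0 ≤ β j ∧ β j ≤ lam) → (informationMatrix x β).PosDef →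
      Real.log (informationMatrix x β).det + κ * (1 - ∑ j, β j) ≤
        Real.log (informationMatrix x α).det + κ * (1 - ∑ j, α j))
    (i : ι) {t : ℝ} (ht : α i + t ∈ Icc 0 lam)
    (hpos : 0 < 1 + t * (x i ⬝ᵥ (informationMatrix x α)⁻¹ *ᵥ x i)) :
    Real.log (1 + t * (x i ⬝ᵥ (informationMatrix x α)⁻¹ *ᵥ x i)) ≤ κ * t := by
  set β : ι → ℝ := α + Pi.single i t with hβ
  have hβbox : ∀ j, 0 ≤ β j ∧ β j ≤ lam := by
    intro j
    rcases eq_or_ne j i with rfl | hj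
    · simpa [hβ] using ht
    · simpa [hβ, hj] using hbox j
  have hβsum : ∑ j, β j = ∑ j, α j + t := by
    simp only [hβ, Pi.add_apply, Finset.sum_add_distrib, Fintype.sum_pi_single']
  have hβdet := det_add_single x hpd i t
  have h := hmax β hβbox (posDef_add_single x hpd (fun j ↦ (hβbox j).1) hpos)
  rw [hβdet, Real.log_mul hpd.det_pos.ne' hpos.ne', hβsum] at h
  linarith

end informationMatrix

end

theorem penalized_KKT_general (N k : ℕ) (x : Fin N → Fin k → ℝ)
    (lam : ℝ)
    (M : (Fin N → ℝ) → Matrix (Fin k) (Fin k) ℝ)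
    (hM : ∀ v, M v = ∑ i, v i • Matrix.vecMulVec (x i) (x i))
    (α : Fin N → ℝ) (hbox : ∀ i, 0 ≤ α i ∧ α i ≤ lam)
    (hpdα : (M α).PosDef)
    (hmaxα : ∀ β : Fin N → ℝ, (∀ i, 0 ≤ β i ∧ β i ≤ lam) → (M β).PosDef →
      Real.log (M β).det + k * (1 - ∑ i, β i) ≤
        Real.log (M α).det + k * (1 - ∑ i, α i)) :
    ∀ i : Fin N,
      (x i ⬝ᵥ ((M α)⁻¹ *ᵥ x i) < (k : ℝ) → α i = 0) ∧
      ((k : ℝ) < x i ⬝ᵥ ((M α)⁻¹ *ᵥ x i) → α i = lam) := by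
  intro i
  obtain rfl : M = informationMatrix x := funext hM
  have hvar := fun t ↦ informationMatrix.log_one_add_mul_le_of_isMax x hbox hpdα hmaxα i (t := t)
  refine ⟨fun hlt ↦ ?_, fun hgt ↦ ?_⟩
  · by_contra hne
    have hpos : 0 < α i := (hbox i).1.lt_of_ne' hne
    refine hlt.not_ge (ge_of_eventually_log_one_add_mul_le_nhdsLT ?_)
    filter_upwards [Ioo_mem_nhdsLT (neg_lt_zero.2 hpos)] with t ht
    exact hvar t ⟨by linarith [ht.1], by linarith [ht.2, (hbox i).2]⟩
  · by_contra hne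
    have hlt : α i < lam := (hbox i).2.lt_of_ne hne
    refine hgt.not_ge (le_of_eventually_log_one_add_mul_le_nhdsGT ?_)
    filter_upwards [Ioo_mem_nhdsGT (sub_pos.2 hlt)] with t ht
    exact hvar t ⟨by linarith [ht.1, (hbox i).1], by linarith [ht.2]⟩

/-- KKT conditions for the penalized problem: if `α` solves
`max_{0 ≤ αᵢ ≤ λ} [log|M(α)| + k(1 − ∑αᵢ)]` with `M(α)` positive definite,
then `αᵢ = 0` if `xᵢᵀ M(α)⁻¹ xᵢ < k` and `αᵢ = λ` if `xᵢᵀ M(α)⁻¹ xᵢ > k`. -/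
theorem penalized_KKT (N k : ℕ) (x : Fin N → Fin k → ℝ)
    (lam : ℝ) (hlam : 0 < lam)
    (M : (Fin N → ℝ) → Matrix (Fin k) (Fin k) ℝ)
    (hM : ∀ v, M v = ∑ i, v i • Matrix.vecMulVec (x i) (x i))
    (α : Fin N → ℝ) (hbox : ∀ i, 0 ≤ α i ∧ α i ≤ lam)
    (hpdα : (M α).PosDef)
    (hmaxα : ∀ β : Fin N → ℝ, (∀ i, 0 ≤ β i ∧ β i ≤ lam) → (M β).PosDef →
      Real.log (M β).det + k * (1 - ∑ i, β i) ≤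
        Real.log (M α).det + k * (1 - ∑ i, α i)) :
    ∀ i : Fin N,
      (x i ⬝ᵥ ((M α)⁻¹ *ᵥ x i) < (k : ℝ) → α i = 0) ∧
      ((k : ℝ) < x i ⬝ᵥ ((M α)⁻¹ *ᵥ x i) → α i = lam) :=
  penalized_KKT_general N k x lam M hM α hbox hpdα hmaxα
end

section
/- Equality condition in the duality: log|M(w)| = −log|W| holds for feasible W (xᵢᵀWxᵢ ≤ k, W ≻ 0) and simplex weight w if and only if W = M(w)⁻¹ and xᵢᵀWxᵢ = k for every i with wᵢ > 0. -/
/-!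
With `S = W^{1/2}`, the matrix `S M(w) S` is positive definite with determinant `|W| |M(w)|` and
trace `∑ wᵢ xᵢᵀ W xᵢ ≤ k`. If the determinant is `1`, the equality case of AM-GM for its
eigenvalues forces `S M(w) S = 1`, i.e. `W = M(w)⁻¹`; the trace is then exactly `k`, which makes
every constraint with `wᵢ > 0` tight.
-/

open Matrix

theorem Real.eq_one_of_prod_eq_one_of_sum_le_card {ι : Type*} [Fintype ι] {a : ι → ℝ}
    (ha : ∀ i, 0 < a i) (hprod : ∏ i, a i = 1) (hsum : ∑ i, a i ≤ Fintype.card ι) (i : ι) :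
    a i = 1 := by
  have hgap : ∀ j ∈ Finset.univ, 0 ≤ a j - 1 - Real.log (a j) := fun j _ => by
    linarith [Real.log_le_sub_one_of_pos (ha j)]
  -- the gaps in `log x ≤ x - 1` add up to `∑ aᵢ - card ι - log ∏ aᵢ ≤ 0`
  have htotal : ∑ j, (a j - 1 - Real.log (a j)) = 0 := by
    refine le_antisymm ?_ (Finset.sum_nonneg hgap)
    rw [Finset.sum_sub_distrib, Finset.sum_sub_distrib, ← Real.log_prod fun j _ => (ha j).ne',
      hprod, Real.log_one]
    simpa using hsum
  by_contra hne
  have := (Finset.sum_eq_zero_iff_of_nonneg hgap).mp htotal i (Finset.mem_univ i)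
  linarith [Real.log_lt_sub_one_of_pos (ha i) hne]

section

open scoped ComplexOrder

variable {n 𝕜 : Type*} [Fintype n] [DecidableEq n] [RCLike 𝕜]

theorem Matrix.PosDef.eq_one_of_det_eq_one_of_re_trace_le {A : Matrix n n 𝕜} (hA : A.PosDef)
    (hdet : A.det = 1) (htr : RCLike.re A.trace ≤ Fintype.card n) : A = 1 := by
  have hprod : ∏ i, hA.1.eigenvalues i = 1 := by
    have := hA.1.det_eq_prod_eigenvalues
    rw [hdet, ← RCLike.ofReal_prod] at this
    exact_mod_cast this.symm
  have hsum : ∑ i, hA.1.eigenvalues i ≤ Fintype.card n := by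
    simpa [hA.1.trace_eq_sum_eigenvalues] using htr
  have hone : hA.1.eigenvalues = 1 := funext <|
    Real.eq_one_of_prod_eq_one_of_sum_le_card hA.eigenvalues_pos hprod hsum
  rw [hA.1.spectral_theorem, hone]
  simp

open scoped MatrixOrder in
theorem Matrix.PosDef.mul_eq_one_of_det_mul_det_eq_one {M W : Matrix n n 𝕜} (hM : M.PosDef)
    (hW : W.PosDef) (hdet : M.det * W.det = 1) (htr : RCLike.re (W * M).trace ≤ Fintype.card n) :
    M * W = 1 := by
  set S := CFC.sqrt W
  have hSS : S * S = W := CFC.sqrt_mul_sqrt_self W hW.posSemidef.nonneg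
  have hS : S.PosDef := (IsStrictlyPositive.sqrt W hW.isStrictlyPositive).posDef
  have hA : (S * M * S).PosDef := by
    simpa only [hS.1.eq] using
      hM.conjTranspose_mul_mul_same (mulVec_injective_iff_isUnit.mpr hS.isUnit)
  have hA1 : S * M * S = 1 := by
    refine hA.eq_one_of_det_eq_one_of_re_trace_le ?_ ?_
    · rw [det_mul, det_mul, ← hdet, ← hSS, det_mul]; ring
    · rwa [Matrix.mul_assoc, trace_mul_comm, Matrix.mul_assoc, hSS, trace_mul_comm]
  rw [← hSS, ← Matrix.mul_assoc]
  exact mul_eq_one_comm.mp (by rwa [Matrix.mul_assoc] at hA1)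

end

theorem Matrix.trace_mul_sum_smul_vecMulVec {ι m R : Type*} [Fintype ι] [Fintype m]
    [CommSemiring R] (W : Matrix m m R) (c : ι → R) (u v : ι → m → R) :
    (W * ∑ i, c i • vecMulVec (u i) (v i)).trace = ∑ i, c i * (v i ⬝ᵥ W *ᵥ u i) := by
  simp [Matrix.mul_sum, trace_sum, mul_vecMulVec, trace_vecMulVec, dotProduct_comm]

/-- Equality condition in the ellipsoid duality: `log|M(w)| = −log|W|` holds
for feasible `W` (`W ≻ 0`, `xᵢᵀWxᵢ ≤ k`) and simplex weight `w` (with `M(w)`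
positive definite) if and only if `W = M(w)⁻¹` and `xᵢᵀWxᵢ = k` for every `i`
with `wᵢ > 0`. -/
theorem ellipsoid_duality_equality_condition (N k : ℕ) (x : Fin N → Fin k → ℝ)
    (M : (Fin N → ℝ) → Matrix (Fin k) (Fin k) ℝ)
    (hM : ∀ v, M v = ∑ i, v i • Matrix.vecMulVec (x i) (x i))
    (W : Matrix (Fin k) (Fin k) ℝ) (hW : W.PosDef)
    (hfeas : ∀ i, x i ⬝ᵥ (W *ᵥ x i) ≤ (k : ℝ))
    (w : Fin N → ℝ) (hw : (∀ i, 0 ≤ w i) ∧ ∑ i, w i = 1)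
    (hpd : (M w).PosDef) :
    Real.log (M w).det = - Real.log W.det ↔
      (W = (M w)⁻¹ ∧ ∀ i, 0 < w i → x i ⬝ᵥ (W *ᵥ x i) = (k : ℝ)) := by
  constructor
  · intro hlog
    have hdet : (M w).det * W.det = 1 := by
      rw [← Real.exp_log (mul_pos hpd.det_pos hW.det_pos),
        Real.log_mul hpd.det_pos.ne' hW.det_pos.ne', hlog, neg_add_cancel, Real.exp_zero]
    have htrace : (W * M w).trace = ∑ i, w i * (x i ⬝ᵥ W *ᵥ x i) := by
      rw [hM]; exact trace_mul_sum_smul_vecMulVec W w x x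
    have hle : ∀ i ∈ Finset.univ, w i * (x i ⬝ᵥ W *ᵥ x i) ≤ w i * k :=
      fun i _ => mul_le_mul_of_nonneg_left (hfeas i) (hw.1 i)
    have hk : ∑ i, w i * (k : ℝ) = k := by rw [← Finset.sum_mul, hw.2, one_mul]
    have hMW : M w * W = 1 := by
      refine hpd.mul_eq_one_of_det_mul_det_eq_one hW hdet ?_
      rw [RCLike.re_to_real, htrace, Fintype.card_fin, ← hk]
      exact Finset.sum_le_sum hle
    have htight : ∑ i, w i * (x i ⬝ᵥ W *ᵥ x i) = ∑ i, w i * (k : ℝ) := by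
      rw [← htrace, mul_eq_one_comm.mp hMW, trace_one, Fintype.card_fin, hk]
    refine ⟨(inv_eq_right_inv hMW).symm, fun i hi => mul_left_cancel₀ hi.ne' ?_⟩
    exact (Finset.sum_eq_sum_iff_of_le hle).mp htight i (Finset.mem_univ i)
  · rintro ⟨rfl, -⟩
    rw [det_nonsing_inv, Ring.inverse_eq_inv', Real.log_inv, neg_neg]
end
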